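/- For all α⁺, λ⁺, α⁻, λ⁻ > 0, the bilateral Gamma distribution BΓ(α⁺,λ⁺;α⁻,λ⁻) is absolutely continuous with respect to Lebesgue measure with density f, and for every x > 0 the density satisfies f(x) = [(λ⁺)^{α⁺} (λ⁻)^{α⁻} / ((λ⁺ + λ⁻)^{α⁻} Γ(α⁺) Γ(α⁻))] · e^{−λ⁺ x} · ∫₀^∞ v^{α⁻ − 1} (x + v/(λ⁺ + λ⁻))^{α⁺ − 1} e^{−v} dv. -/

import Mathlib

open MeasureTheory Filter Set Topology

/-- The Gamma(α,λ) density: `λ^α t^(α-1) e^(-λt) / Γ(α)` for `t > 0`, and `0` for `t ≤ 0`. -/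
noncomputable def gammaDensity (a l t : ℝ) : ℝ :=
  if 0 < t then l ^ a * t ^ (a - 1) * Real.exp (-l * t) / Real.Gamma a else 0

/-- The Gamma(α,λ) distribution on ℝ. -/
noncomputable def gammaMeasure' (a l : ℝ) : Measure ℝ :=
  volume.withDensity fun t => ENNReal.ofReal (gammaDensity a l t)

/-- The bilateral Gamma distribution BΓ(α⁺,λ⁺;α⁻,λ⁻): the pushforward of
`Gamma(α⁺,λ⁺) ⊗ Gamma(α⁻,λ⁻)` under `(x, y) ↦ x - y`. -/
noncomputable def bilateralGammaMeasure (ap lp am lm : ℝ) : Measure ℝ :=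
  ((gammaMeasure' ap lp).prod (gammaMeasure' am lm)).map fun p => p.1 - p.2

/-- The bilateral Gamma density `f(x) = ∫₀^∞ g_{α⁺,λ⁺}(x + y) g_{α⁻,λ⁻}(y) dy`. -/
noncomputable def bilateralGammaDensity (ap lp am lm : ℝ) (x : ℝ) : ℝ :=
  ∫ y in Ioi (0 : ℝ), gammaDensity ap lp (x + y) * gammaDensity am lm y

open scoped ENNReal

lemma measurable_gammaDensity (a l : ℝ) : Measurable (gammaDensity a l) := by
  unfold gammaDensity
  exact Measurable.ite measurableSet_Ioi
    ((((measurable_const.mul (measurable_id'.pow_const _)).mul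
      (measurable_id'.const_mul _).exp).div_const _)) measurable_const

lemma gammaDensity_nonneg {a l : ℝ} (ha : 0 < a) (hl : 0 < l) (t : ℝ) :
    0 ≤ gammaDensity a l t := by
  unfold gammaDensity
  split_ifs with h
  · have := Real.Gamma_pos_of_pos ha
    positivity
  · exact le_refl 0

lemma gammaDensity_ae_eq_pdf {a l : ℝ} :
    (fun t => ENNReal.ofReal (gammaDensity a l t)) =ᵐ[volume]
      ProbabilityTheory.gammaPDF a l := by
  filter_upwards [compl_mem_ae_iff.mpr (Real.volume_singleton (a := (0:ℝ)))] with t ht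
  have ht' : t ≠ 0 := ht
  unfold gammaDensity ProbabilityTheory.gammaPDF ProbabilityTheory.gammaPDFReal
  rcases lt_or_gt_of_ne ht' with h | h
  · rw [if_neg (not_lt.mpr h.le), if_neg (not_le.mpr h)]
  · rw [if_pos h, if_pos h.le]
    ring_nf

lemma lintegral_gammaDensity {a l : ℝ} (ha : 0 < a) (hl : 0 < l) :
    ∫⁻ t, ENNReal.ofReal (gammaDensity a l t) = 1 := by
  rw [lintegral_congr_ae gammaDensity_ae_eq_pdf]
  exact ProbabilityTheory.lintegral_gammaPDF_eq_one ha hl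

lemma withDensity_prod_withDensity {f g : ℝ → ℝ≥0∞} (hf : Measurable f) (hg : Measurable g)
    [SigmaFinite (volume.withDensity f)] [SigmaFinite (volume.withDensity g)] :
    (volume.withDensity f).prod (volume.withDensity g)
      = ((volume : Measure ℝ).prod volume).withDensity (fun p => f p.1 * g p.2) := by
  refine Measure.prod_eq fun s t hs ht => ?_
  rw [withDensity_apply _ (hs.prod ht), ← Measure.prod_restrict,
    lintegral_prod_mul hf.aemeasurable hg.aemeasurable,
    withDensity_apply _ hs, withDensity_apply _ ht]

lemma map_sub_withDensity {f g : ℝ → ℝ≥0∞} (hf : Measurable f) (hg : Measurable g)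
    [SigmaFinite (volume.withDensity f)] [SigmaFinite (volume.withDensity g)] :
    ((volume.withDensity f).prod (volume.withDensity g)).map (fun p : ℝ × ℝ => p.1 - p.2)
      = volume.withDensity (fun x => ∫⁻ y, f (x + y) * g y) := by
  have hT : Measurable fun p : ℝ × ℝ => p.1 - p.2 := measurable_fst.sub measurable_snd
  have hD : Measurable fun x : ℝ => ∫⁻ y, f (x + y) * g y :=
    Measurable.lintegral_prod_right
      ((hf.comp (measurable_fst.add measurable_snd)).mul (hg.comp measurable_snd))
  refine Measure.ext fun s hs => ?_
  have hind : Measurable (s.indicator (1 : ℝ → ℝ≥0∞)) := measurable_one.indicator hs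
  rw [withDensity_prod_withDensity hf hg, Measure.map_apply hT hs,
    withDensity_apply _ (hT hs), withDensity_apply _ hs,
    ← lintegral_indicator (hT hs), ← lintegral_indicator hs]
  have h1 : ∀ p : ℝ × ℝ, ((fun p : ℝ × ℝ => p.1 - p.2) ⁻¹' s).indicator
      (fun p : ℝ × ℝ => f p.1 * g p.2) p = f p.1 * g p.2 * s.indicator 1 (p.1 - p.2) := by
    intro p
    by_cases hp : p.1 - p.2 ∈ s
    · simp [Set.indicator_of_mem, hp, Set.mem_preimage.mpr hp]
    · simp [Set.indicator_of_notMem, hp, fun h => hp (Set.mem_preimage.mp h)]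
  rw [lintegral_congr h1]
  have hmeas : Measurable fun p : ℝ × ℝ => f p.1 * g p.2 * s.indicator 1 (p.1 - p.2) := by
    exact ((hf.comp measurable_fst).mul (hg.comp measurable_snd)).mul (hind.comp hT)
  rw [lintegral_prod_symm _ hmeas.aemeasurable]
  have h2 : ∀ y : ℝ, (∫⁻ x, f x * g y * s.indicator 1 (x - y))
      = ∫⁻ x, f (x + y) * g y * s.indicator 1 x := by
    intro y
    have := lintegral_add_right_eq_self (μ := volume)
      (fun x => f x * g y * s.indicator 1 (x - y)) y
    simp only [add_sub_cancel_right] at this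
    exact this.symm
  simp only [h2]
  rw [← lintegral_lintegral_swap]
  · refine lintegral_congr fun x => ?_
    calc ∫⁻ y, f (x + y) * g y * s.indicator 1 x
        = ∫⁻ y, s.indicator 1 x * (f (x + y) * g y) := by
          refine lintegral_congr fun y => by ring
      _ = s.indicator 1 x * ∫⁻ y, f (x + y) * g y := by
          have hm : Measurable fun y => f (x + y) * g y := by
            exact (hf.comp (measurable_const.add measurable_id)).mul hg
          rw [lintegral_const_mul _ hm]
      _ = s.indicator (fun x => ∫⁻ y, f (x + y) * g y) x := by
          by_cases hx : x ∈ s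
          · simp [Set.indicator_of_mem hx]
          · simp [Set.indicator_of_notMem hx]
  · have hm2 : Measurable fun p : ℝ × ℝ => f (p.1 + p.2) * g p.2 * s.indicator 1 p.1 := by
      exact ((hf.comp (measurable_fst.add measurable_snd)).mul (hg.comp measurable_snd)).mul
        (hind.comp measurable_fst)
    exact hm2.aemeasurable

lemma bilateral_density_ae_eq {ap lp am lm : ℝ}
    (hap : 0 < ap) (hlp : 0 < lp) (ham : 0 < am) (hlm : 0 < lm) :
    (fun x => ∫⁻ y, ENNReal.ofReal (gammaDensity ap lp (x + y))
        * ENNReal.ofReal (gammaDensity am lm y))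
      =ᵐ[volume] fun x => ENNReal.ofReal (bilateralGammaDensity ap lp am lm x) := by
  have hf : Measurable fun t => ENNReal.ofReal (gammaDensity ap lp t) :=
    (measurable_gammaDensity ap lp).ennreal_ofReal
  have hg : Measurable fun t => ENNReal.ofReal (gammaDensity am lm t) :=
    (measurable_gammaDensity am lm).ennreal_ofReal
  have hFmeas : Measurable fun x : ℝ => ∫⁻ y, ENNReal.ofReal (gammaDensity ap lp (x + y))
      * ENNReal.ofReal (gammaDensity am lm y) :=
    Measurable.lintegral_prod_right
      ((hf.comp (measurable_fst.add measurable_snd)).mul (hg.comp measurable_snd))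
  have hFint : (∫⁻ x, ∫⁻ y, ENNReal.ofReal (gammaDensity ap lp (x + y))
      * ENNReal.ofReal (gammaDensity am lm y)) = 1 := by
    rw [lintegral_lintegral_swap]
    · have h1 : ∀ y : ℝ, (∫⁻ x, ENNReal.ofReal (gammaDensity ap lp (x + y))
          * ENNReal.ofReal (gammaDensity am lm y))
          = ENNReal.ofReal (gammaDensity am lm y) := by
        intro y
        have hm : Measurable fun x : ℝ => ENNReal.ofReal (gammaDensity ap lp (x + y)) := by
          exact hf.comp (measurable_id.add_const y)
        rw [lintegral_mul_const _ hm]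
        rw [lintegral_add_right_eq_self (fun x => ENNReal.ofReal (gammaDensity ap lp x)) y,
          lintegral_gammaDensity hap hlp, one_mul]
      simp only [h1]
      exact lintegral_gammaDensity ham hlm
    · have hm2 : Measurable fun p : ℝ × ℝ => ENNReal.ofReal (gammaDensity ap lp (p.1 + p.2))
          * ENNReal.ofReal (gammaDensity am lm p.2) := by
        exact (hf.comp (measurable_fst.add measurable_snd)).mul (hg.comp measurable_snd)
      exact hm2.aemeasurable
  filter_upwards [ae_lt_top hFmeas (hFint ▸ ENNReal.one_ne_top)] with x hx
  have hres : (∫⁻ y, ENNReal.ofReal (gammaDensity ap lp (x + y))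
      * ENNReal.ofReal (gammaDensity am lm y))
      = ∫⁻ y in Ioi (0:ℝ), ENNReal.ofReal (gammaDensity ap lp (x + y)
          * gammaDensity am lm y) := by
    rw [← lintegral_indicator measurableSet_Ioi]
    refine lintegral_congr fun y => ?_
    by_cases hy : y ∈ Ioi (0:ℝ)
    · rw [Set.indicator_of_mem hy, ENNReal.ofReal_mul (gammaDensity_nonneg hap hlp _)]
    · rw [Set.indicator_of_notMem hy]
      have h0 : gammaDensity am lm y = 0 := if_neg (by simpa using hy)
      simp [h0]
  rw [hres] at hx ⊢
  unfold bilateralGammaDensity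
  have hms : AEStronglyMeasurable
      (fun y => gammaDensity ap lp (x + y) * gammaDensity am lm y)
      (volume.restrict (Ioi (0:ℝ))) := by
    have : Measurable fun y => gammaDensity ap lp (x + y) * gammaDensity am lm y := by
      exact ((measurable_gammaDensity ap lp).comp (measurable_const.add measurable_id)).mul
        (measurable_gammaDensity am lm)
    exact this.aestronglyMeasurable
  rw [integral_eq_lintegral_of_nonneg_ae (ae_of_all _ fun y =>
      mul_nonneg (gammaDensity_nonneg hap hlp _) (gammaDensity_nonneg ham hlm _)) hms]
  exact (ENNReal.ofReal_toReal hx.ne).symm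

lemma bilateral_repr {ap lp am lm x : ℝ}
    (hap : 0 < ap) (hlp : 0 < lp) (ham : 0 < am) (hlm : 0 < lm) (hx : 0 < x) :
    bilateralGammaDensity ap lp am lm x
        = lp ^ ap * lm ^ am / ((lp + lm) ^ am * Real.Gamma ap * Real.Gamma am)
            * Real.exp (-lp * x)
            * ∫ v in Ioi (0 : ℝ),
                v ^ (am - 1) * (x + v / (lp + lm)) ^ (ap - 1) * Real.exp (-v) := by
  have hb : 0 < lp + lm := by linarith
  have hGp := Real.Gamma_pos_of_pos hap
  have hGm := Real.Gamma_pos_of_pos ham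
  set K : ℝ := lp ^ ap * lm ^ am / (Real.Gamma ap * Real.Gamma am) * Real.exp (-lp * x)
      / (lp + lm) ^ (am - 1) with hK
  set g : ℝ → ℝ := fun v => v ^ (am - 1) * (x + v / (lp + lm)) ^ (ap - 1) * Real.exp (-v)
    with hg
  have key : ∀ y ∈ Ioi (0:ℝ),
      gammaDensity ap lp (x + y) * gammaDensity am lm y = K * g ((lp + lm) * y) := by
    intro y hy
    have hy' : (0:ℝ) < y := hy
    have hxy : 0 < x + y := by linarith
    have hdiv : (lp + lm) * y / (lp + lm) = y := by field_simp
    have hexp : Real.exp (-(lp * (x + y))) * Real.exp (-(lm * y))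
        = Real.exp (-(lp * x)) * Real.exp (-((lp + lm) * y)) := by
      rw [← Real.exp_add, ← Real.exp_add]; ring_nf
    have hpow : ((lp + lm) : ℝ) ^ (am - 1) ≠ 0 := (Real.rpow_pos_of_pos hb _).ne'
    simp only [gammaDensity, if_pos hxy, if_pos hy', hg, hK, neg_mul]
    rw [hdiv, Real.mul_rpow hb.le hy'.le]
    field_simp
    convert hexp using 2 <;> ring_nf
  rw [bilateralGammaDensity, setIntegral_congr_fun measurableSet_Ioi key]
  rw [integral_const_mul]
  have := integral_comp_mul_left_Ioi g 0 hb
  rw [mul_zero] at this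
  rw [this, smul_eq_mul]
  have h2 : (lp + lm) ^ am = (lp + lm) ^ (am - 1) * (lp + lm) := by
    rw [← Real.rpow_add_one hb.ne' (am - 1)]; norm_num
  have hconst : K * (lp + lm)⁻¹
      = lp ^ ap * lm ^ am / ((lp + lm) ^ am * Real.Gamma ap * Real.Gamma am)
        * Real.exp (-lp * x) := by
    rw [hK, h2]
    have hpow : ((lp + lm) : ℝ) ^ (am - 1) ≠ 0 := (Real.rpow_pos_of_pos hb _).ne'
    field_simp
  rw [← mul_assoc, hconst]

/-- The bilateral Gamma distribution is absolutely continuous w.r.t. Lebesgue measure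
with density `f`, and for `x > 0` the density is given by the stated formula. -/
theorem bilateralGamma_density_repr (ap lp am lm : ℝ)
    (hap : 0 < ap) (hlp : 0 < lp) (ham : 0 < am) (hlm : 0 < lm) :
    bilateralGammaMeasure ap lp am lm
      = volume.withDensity (fun x => ENNReal.ofReal (bilateralGammaDensity ap lp am lm x)) ∧
    ∀ x : ℝ, 0 < x →
      bilateralGammaDensity ap lp am lm x
        = lp ^ ap * lm ^ am / ((lp + lm) ^ am * Real.Gamma ap * Real.Gamma am)
            * Real.exp (-lp * x)
            * ∫ v in Ioi (0 : ℝ),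
                v ^ (am - 1) * (x + v / (lp + lm)) ^ (ap - 1) * Real.exp (-v) := by
  constructor
  · have hf : Measurable fun t => ENNReal.ofReal (gammaDensity ap lp t) :=
      (measurable_gammaDensity ap lp).ennreal_ofReal
    have hg : Measurable fun t => ENNReal.ofReal (gammaDensity am lm t) :=
      (measurable_gammaDensity am lm).ennreal_ofReal
    haveI : IsFiniteMeasure (volume.withDensity fun t => ENNReal.ofReal (gammaDensity ap lp t)) :=
      isFiniteMeasure_withDensity (by rw [lintegral_gammaDensity hap hlp]; exact ENNReal.one_ne_top)
    haveI : IsFiniteMeasure (volume.withDensity fun t => ENNReal.ofReal (gammaDensity am lm t)) :=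
      isFiniteMeasure_withDensity (by rw [lintegral_gammaDensity ham hlm]; exact ENNReal.one_ne_top)
    rw [bilateralGammaMeasure, gammaMeasure', gammaMeasure', map_sub_withDensity hf hg]
    exact withDensity_congr_ae (bilateral_density_ae_eq hap hlp ham hlm)
  · exact fun x hx => bilateral_repr hap hlp ham hlm hx
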